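/- arXiv:2105.04592 — 9 statements merged into one kernel-verified Lean document; each statement's English description precedes it below -/
import Mathlib

section
/- Let (D, S) be a summation on R to E. If a series X ∈ R[[σ]] telescopes over S to x ∈ E and also telescopes over S to x′ ∈ E, then x = x′. (Well-definedness of the telescopic extension.) -/
/-- A summation on a commutative ring `R` to a commutative `R`-algebra `E`:
an `R`-submodule `D` of `R[[σ]]` containing all polynomials, together with a map
`S` (whose values are only meaningful on `D`) which is `R`-linear on `D`,
sums `1` to `1`, and is invariant under multiplication by `1 - σ`. -/
structure Summation (R E : Type*) [CommRing R] [CommRing E] [Algebra R E] where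
  D : Submodule R (PowerSeries R)
  S : PowerSeries R → E
  S_add : ∀ X ∈ D, ∀ Y ∈ D, S (X + Y) = S X + S Y
  S_smul : ∀ (r : R), ∀ X ∈ D, S (r • X) = r • S X
  poly_mem : ∀ F : Polynomial R, (F : PowerSeries R) ∈ D
  S_one : S 1 = 1
  shift_mem : ∀ X ∈ D, (1 - PowerSeries.X) * X ∈ D
  S_shift : ∀ X ∈ D, S ((1 - PowerSeries.X) * X) = 0

/-- `X` telescopes over the summation `𝒮` to the value `x`. -/
def Telescopes {R E : Type*} [CommRing R] [CommRing E] [Algebra R E]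
    (𝒮 : Summation R E) (X : PowerSeries R) (x : E) : Prop :=
  ∃ (F : Polynomial R) (A : PowerSeries R), A ∈ 𝒮.D ∧
    A = (F : PowerSeries R) * X ∧
    𝒮.S (F : PowerSeries R) ∈ nonZeroDivisors E ∧
    𝒮.S A = 𝒮.S (F : PowerSeries R) * x


section Aux
variable {R E : Type*} [CommRing R] [CommRing E] [Algebra R E]

lemma Summation.X_mul_mem (𝒮 : Summation R E) {A : PowerSeries R} (hA : A ∈ 𝒮.D) :
    PowerSeries.X * A ∈ 𝒮.D := by
  have : PowerSeries.X * A = A - (1 - PowerSeries.X) * A := by ring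
  rw [this]
  exact Submodule.sub_mem _ hA (𝒮.shift_mem A hA)

lemma Summation.S_sub (𝒮 : Summation R E) {A B : PowerSeries R} (hA : A ∈ 𝒮.D)
    (hB : B ∈ 𝒮.D) : 𝒮.S (A - B) = 𝒮.S A - 𝒮.S B := by
  have h1 : 𝒮.S (A + (-1 : R) • B) = 𝒮.S A + 𝒮.S ((-1 : R) • B) :=
    𝒮.S_add A hA _ (Submodule.smul_mem _ _ hB)
  have h2 : 𝒮.S ((-1 : R) • B) = (-1 : R) • 𝒮.S B := 𝒮.S_smul _ B hB
  have h3 : A - B = A + (-1 : R) • B := by simp [sub_eq_add_neg]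
  rw [h3, h1, h2]; simp [sub_eq_add_neg]

lemma Summation.S_X_mul (𝒮 : Summation R E) {A : PowerSeries R} (hA : A ∈ 𝒮.D) :
    𝒮.S (PowerSeries.X * A) = 𝒮.S A := by
  have : PowerSeries.X * A = A - (1 - PowerSeries.X) * A := by ring
  rw [this, 𝒮.S_sub hA (𝒮.shift_mem A hA), 𝒮.S_shift A hA, sub_zero]

lemma Summation.Xpow_mul (𝒮 : Summation R E) (n : ℕ) {A : PowerSeries R} (hA : A ∈ 𝒮.D) :
    PowerSeries.X ^ n * A ∈ 𝒮.D ∧ 𝒮.S (PowerSeries.X ^ n * A) = 𝒮.S A := by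
  induction n with
  | zero =>
    simp only [pow_zero, one_mul]
    exact ⟨hA, trivial⟩
  | succ n ih =>
    have h : PowerSeries.X ^ (n + 1) * A = PowerSeries.X * (PowerSeries.X ^ n * A) := by ring
    rw [h]
    exact ⟨𝒮.X_mul_mem ih.1, by rw [𝒮.S_X_mul ih.1]; exact ih.2⟩

lemma Summation.poly_mul (𝒮 : Summation R E) (G : Polynomial R) {A : PowerSeries R}
    (hA : A ∈ 𝒮.D) :
    (G : PowerSeries R) * A ∈ 𝒮.D ∧ 𝒮.S ((G : PowerSeries R) * A) = G.eval 1 • 𝒮.S A := by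
  induction G using Polynomial.induction_on' with
  | add p q hp hq =>
    rw [Polynomial.coe_add, add_mul]
    refine ⟨Submodule.add_mem _ hp.1 hq.1, ?_⟩
    rw [𝒮.S_add _ hp.1 _ hq.1, hp.2, hq.2, Polynomial.eval_add, add_smul]
  | monomial n a =>
    have hc : ((Polynomial.monomial n a : Polynomial R) : PowerSeries R) * A
        = a • (PowerSeries.X ^ n * A) := by
      rw [← Polynomial.C_mul_X_pow_eq_monomial]
      push_cast
      rw [PowerSeries.smul_eq_C_mul]
      ring
    rw [hc]
    refine ⟨Submodule.smul_mem _ _ (𝒮.Xpow_mul n hA).1, ?_⟩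
    rw [𝒮.S_smul _ _ (𝒮.Xpow_mul n hA).1, (𝒮.Xpow_mul n hA).2]
    simp

lemma Summation.S_poly (𝒮 : Summation R E) (G : Polynomial R) :
    𝒮.S (G : PowerSeries R) = G.eval 1 • (1 : E) := by
  have h1 : (1 : PowerSeries R) ∈ 𝒮.D := by
    simpa using 𝒮.poly_mem 1
  have := (𝒮.poly_mul G h1).2
  rw [mul_one] at this
  rw [this, 𝒮.S_one]

end Aux

theorem telescopes_unique {R E : Type*} [CommRing R] [CommRing E] [Algebra R E]
    [Nontrivial R] [Nontrivial E]
    (𝒮 : Summation R E) (X : PowerSeries R) (x x' : E)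
    (h : Telescopes 𝒮 X x) (h' : Telescopes 𝒮 X x') : x = x' := by
  obtain ⟨F, A, hA, hAF, hreg, hS⟩ := h
  obtain ⟨F', A', hA', hAF', hreg', hS'⟩ := h'
  have key : (F' : PowerSeries R) * A = (F : PowerSeries R) * A' := by
    rw [hAF, hAF']; ring
  have e1 := (𝒮.poly_mul F' hA).2
  have e2 := (𝒮.poly_mul F hA').2
  rw [key, e2, hS, hS'] at e1
  -- e1 : F.eval 1 • (𝒮.S F' * x') = F'.eval 1 • (𝒮.S F * x)
  have l1 : F.eval 1 • (𝒮.S (F' : PowerSeries R) * x')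
      = 𝒮.S (F : PowerSeries R) * (𝒮.S (F' : PowerSeries R) * x') := by
    rw [𝒮.S_poly F, smul_mul_assoc, one_mul]
  have l2 : F'.eval 1 • (𝒮.S (F : PowerSeries R) * x)
      = 𝒮.S (F' : PowerSeries R) * (𝒮.S (F : PowerSeries R) * x) := by
    rw [𝒮.S_poly F', smul_mul_assoc, one_mul]
  rw [l1, l2] at e1
  have e3 : 𝒮.S (F' : PowerSeries R) * (𝒮.S (F : PowerSeries R) * x)
      = 𝒮.S (F' : PowerSeries R) * (𝒮.S (F : PowerSeries R) * x') := by
    rw [← e1]; ring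
  have e4 := (mul_cancel_left_mem_nonZeroDivisors hreg').mp e3
  exact (mul_cancel_left_mem_nonZeroDivisors hreg).mp e4
end

section
/- Let (D, S) and (D′, S′) be summations on R to E with D ⊆ D′ and S′ restricted to D equal to S (S′ extends S). If X ∈ D′ and X telescopes over S to x ∈ E, then S′(X) = x. (The telescopic extension is canonical: every extension of S agrees with the telescopic extension of S on their common domain.) -/
namespace Summation
variable {R E : Type*} [CommRing R] [CommRing E] [Algebra R E]

lemma S_sub_s2 (𝒮 : Summation R E) {X Y : PowerSeries R} (hX : X ∈ 𝒮.D) (hY : Y ∈ 𝒮.D) :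
    𝒮.S (X - Y) = 𝒮.S X - 𝒮.S Y := by
  have h : X - Y = X + (-1 : R) • Y := by ring_nf; module
  rw [h, 𝒮.S_add X hX _ (𝒮.D.smul_mem _ hY), 𝒮.S_smul _ _ hY]
  simp [sub_eq_add_neg]

lemma sigma_mul_mem (𝒮 : Summation R E) {X : PowerSeries R} (hX : X ∈ 𝒮.D) :
    PowerSeries.X * X ∈ 𝒮.D := by
  have : PowerSeries.X * X = X - (1 - PowerSeries.X) * X := by ring
  rw [this]; exact 𝒮.D.sub_mem hX (𝒮.shift_mem X hX)

lemma S_sigma_mul (𝒮 : Summation R E) {X : PowerSeries R} (hX : X ∈ 𝒮.D) :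
    𝒮.S (PowerSeries.X * X) = 𝒮.S X := by
  have h : PowerSeries.X * X = X - (1 - PowerSeries.X) * X := by ring
  rw [h, 𝒮.S_sub_s2 hX (𝒮.shift_mem X hX), 𝒮.S_shift X hX, sub_zero]

lemma S_pow_mul (𝒮 : Summation R E) (n : ℕ) {X : PowerSeries R} (hX : X ∈ 𝒮.D) :
    PowerSeries.X ^ n * X ∈ 𝒮.D ∧ 𝒮.S (PowerSeries.X ^ n * X) = 𝒮.S X := by
  induction n with
  | zero => simpa using hX
  | succ n ih =>
    have h : PowerSeries.X ^ (n+1) * X = PowerSeries.X * (PowerSeries.X ^ n * X) := by ring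
    rw [h]
    exact ⟨𝒮.sigma_mul_mem ih.1, by rw [𝒮.S_sigma_mul ih.1, ih.2]⟩

lemma S_poly_mul (𝒮 : Summation R E) (F : Polynomial R) {X : PowerSeries R} (hX : X ∈ 𝒮.D) :
    (F : PowerSeries R) * X ∈ 𝒮.D ∧
      𝒮.S ((F : PowerSeries R) * X) = F.eval 1 • 𝒮.S X := by
  induction F using Polynomial.induction_on' with
  | add p q hp hq =>
    push_cast
    rw [add_mul]
    refine ⟨𝒮.D.add_mem hp.1 hq.1, ?_⟩
    rw [𝒮.S_add _ hp.1 _ hq.1, hp.2, hq.2, Polynomial.eval_add, add_smul]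
  | monomial n a =>
    have hm : ((Polynomial.monomial n a : Polynomial R) : PowerSeries R)
        = a • (PowerSeries.X : PowerSeries R) ^ n := by
      push_cast
      rw [PowerSeries.X_pow_eq, ← map_smul, smul_eq_mul, mul_one]
    have hc : ((Polynomial.monomial n a : Polynomial R) : PowerSeries R) * X
        = a • (PowerSeries.X ^ n * X) := by
      rw [hm, smul_mul_assoc]
    rw [hc]
    refine ⟨𝒮.D.smul_mem _ (𝒮.S_pow_mul n hX).1, ?_⟩
    rw [𝒮.S_smul _ _ (𝒮.S_pow_mul n hX).1, (𝒮.S_pow_mul n hX).2]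
    simp

lemma S_poly_s2 (𝒮 : Summation R E) (F : Polynomial R) :
    𝒮.S (F : PowerSeries R) = F.eval 1 • (1 : E) := by
  have := (𝒮.S_poly_mul F (X := 1) (by simpa using 𝒮.poly_mem 1)).2
  simpa [𝒮.S_one] using this

end Summation

theorem telescopic_canonical {R E : Type*} [CommRing R] [CommRing E] [Algebra R E]
    [Nontrivial R] [Nontrivial E]
    (𝒮 𝒮' : Summation R E)
    (hD : 𝒮.D ≤ 𝒮'.D)
    (hS : ∀ X ∈ 𝒮.D, 𝒮'.S X = 𝒮.S X)
    (X : PowerSeries R) (hX : X ∈ 𝒮'.D) (x : E)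
    (htel : Telescopes 𝒮 X x) :
    𝒮'.S X = x := by
  obtain ⟨F, A, hA, hAFX, hreg, hSA⟩ := htel
  have key : 𝒮.S (F : PowerSeries R) * 𝒮'.S X = 𝒮.S (F : PowerSeries R) * x := by
    have h1 : 𝒮'.S ((F : PowerSeries R) * X) = F.eval 1 • 𝒮'.S X :=
      (𝒮'.S_poly_mul F hX).2
    have h2 : 𝒮.S (F : PowerSeries R) = F.eval 1 • (1 : E) := 𝒮.S_poly_s2 F
    calc 𝒮.S (F : PowerSeries R) * 𝒮'.S X
        = F.eval 1 • 𝒮'.S X := by rw [h2, smul_mul_assoc, one_mul]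
      _ = 𝒮'.S A := by rw [hAFX, h1]
      _ = 𝒮.S A := hS A hA
      _ = 𝒮.S (F : PowerSeries R) * x := hSA
  exact mul_cancel_left_mem_nonZeroDivisors hreg |>.mp key
end

section
/- Let (D, S) be a multiplicative summation on R to E. If X₁ ∈ R[[σ]] telescopes over S to x₁ ∈ E and X₂ ∈ R[[σ]] telescopes over S to x₂ ∈ E, then the product X₁·X₂ telescopes over S to x₁·x₂. (Telescopic extensions preserve multiplicativity.) -/
/-- A multiplicative summation: the domain is moreover an `R`-subalgebra of `R[[σ]]`
and `S` is an `R`-algebra homomorphism on it. -/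
structure MulSummation (R E : Type*) [CommRing R] [CommRing E] [Algebra R E]
    extends Summation R E where
  mul_mem : ∀ X ∈ D, ∀ Y ∈ D, X * Y ∈ D
  S_mul : ∀ X ∈ D, ∀ Y ∈ D, S (X * Y) = S X * S Y

theorem telescopic_preserves_mul {R E : Type*} [CommRing R] [CommRing E] [Algebra R E]
    [Nontrivial R] [Nontrivial E]
    (𝒮 : MulSummation R E) (X₁ X₂ : PowerSeries R) (x₁ x₂ : E)
    (h₁ : Telescopes 𝒮.toSummation X₁ x₁) (h₂ : Telescopes 𝒮.toSummation X₂ x₂) :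
    Telescopes 𝒮.toSummation (X₁ * X₂) (x₁ * x₂) := by
  obtain ⟨F₁, A₁, hA₁D, hA₁eq, hF₁reg, hS₁⟩ := h₁
  obtain ⟨F₂, A₂, hA₂D, hA₂eq, hF₂reg, hS₂⟩ := h₂
  refine ⟨F₁ * F₂, A₁ * A₂, 𝒮.mul_mem _ hA₁D _ hA₂D, ?_, ?_, ?_⟩
  · push_cast
    rw [hA₁eq, hA₂eq]; ring
  · have : 𝒮.S ((F₁ * F₂ : Polynomial R) : PowerSeries R)
        = 𝒮.S (F₁ : PowerSeries R) * 𝒮.S (F₂ : PowerSeries R) := by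
      push_cast
      exact 𝒮.S_mul _ (𝒮.poly_mem F₁) _ (𝒮.poly_mem F₂)
    rw [this]
    exact mul_mem hF₁reg hF₂reg
  · have h := 𝒮.S_mul _ hA₁D _ hA₂D
    rw [h, hS₁, hS₂]
    push_cast
    rw [𝒮.S_mul _ (𝒮.poly_mem F₁) _ (𝒮.poly_mem F₂)]
    ring
end

section
/- Let (D, S) be a summation on R to E. The following are equivalent: (i) there exists a multiplicative summation (D′, S′) on R to E with D ⊆ D′ and S′ restricted to D equal to S (i.e., S is weakly multiplicative); (ii) for every ℓ ∈ ℕ, every family of lengths k₁, …, k_ℓ ∈ ℕ, and every family of series X_{i,j} ∈ D (1 ≤ i ≤ ℓ, 1 ≤ j ≤ kᵢ) such that Σ_{i=1}^{ℓ} Π_{j=1}^{kᵢ} X_{i,j} = 0 in R[[σ]], one has Σ_{i=1}^{ℓ} Π_{j=1}^{kᵢ} S(X_{i,j}) = 0 in E. -/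
namespace Summation

variable {R E : Type*} [CommRing R] [CommRing E] [Algebra R E] (𝒮 : Summation R E)

theorem S_zero : 𝒮.S 0 = 0 := by
  simpa using 𝒮.S_smul 0 0 𝒮.D.zero_mem

theorem one_mem : (1 : PowerSeries R) ∈ 𝒮.D := by
  simpa using 𝒮.poly_mem 1

theorem C_mem (r : R) : PowerSeries.C r ∈ 𝒮.D := by
  simpa using 𝒮.poly_mem (Polynomial.C r)

theorem S_C (r : R) : 𝒮.S (PowerSeries.C r) = algebraMap R E r := by
  rw [PowerSeries.C_eq_algebraMap, Algebra.algebraMap_eq_smul_one, 𝒮.S_smul r 1 𝒮.one_mem,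
    𝒮.S_one, Algebra.algebraMap_eq_smul_one]

theorem one_sub_X_mem : (1 - PowerSeries.X : PowerSeries R) ∈ 𝒮.D := by
  have h := 𝒮.poly_mem (1 - Polynomial.X)
  rwa [Polynomial.coe_sub, Polynomial.coe_one, Polynomial.coe_X] at h

theorem S_one_sub_X : 𝒮.S (1 - PowerSeries.X) = 0 := by
  simpa using 𝒮.S_shift 1 𝒮.one_mem

def RespectsRelations : Prop :=
  ∀ (ℓ : ℕ) (k : Fin ℓ → ℕ) (X : (i : Fin ℓ) → Fin (k i) → PowerSeries R),
    (∀ i j, X i j ∈ 𝒮.D) →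
    (∑ i : Fin ℓ, ∏ j : Fin (k i), X i j) = 0 →
    (∑ i : Fin ℓ, ∏ j : Fin (k i), 𝒮.S (X i j)) = 0

variable {𝒮}

theorem RespectsRelations.list (h : 𝒮.RespectsRelations)
    (l : List (List (PowerSeries R))) (hl : ∀ t ∈ l, ∀ x ∈ t, x ∈ 𝒮.D)
    (hsum : (l.map List.prod).sum = 0) :
    (l.map fun t => (t.map 𝒮.S).prod).sum = 0 := by
  have h' := h l.length (fun i => l[i].length) (fun i j => l[i][j])
    (fun i j => hl _ (List.getElem_mem _) _ (List.getElem_mem _))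
  rw [← Fin.sum_univ_fun_getElem] at hsum ⊢
  simpa only [Fin.getElem_fin, Fin.prod_univ_fun_getElem, Fin.prod_univ_getElem] using h' (by
    simpa only [Fin.getElem_fin, Fin.prod_univ_getElem] using hsum)

theorem RespectsRelations.multiset (h : 𝒮.RespectsRelations)
    (T : Multiset (Multiset (PowerSeries R))) (hT : ∀ t ∈ T, ∀ x ∈ t, x ∈ 𝒮.D)
    (hsum : (T.map Multiset.prod).sum = 0) :
    (T.map fun t => (t.map 𝒮.S).prod).sum = 0 := by
  simpa using h.list (T.toList.map Multiset.toList) (by simpa using hT) (by simpa using hsum)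

variable (𝒮)

noncomputable def evalSeries : MvPolynomial 𝒮.D R →ₐ[R] PowerSeries R :=
  MvPolynomial.aeval Subtype.val

noncomputable def evalSum : MvPolynomial 𝒮.D R →ₐ[R] E :=
  MvPolynomial.aeval fun d => 𝒮.S d

@[simp]
theorem evalSeries_X (d : 𝒮.D) : 𝒮.evalSeries (MvPolynomial.X d) = d :=
  MvPolynomial.aeval_X _ _

@[simp]
theorem evalSum_X (d : 𝒮.D) : 𝒮.evalSum (MvPolynomial.X d) = 𝒮.S d :=
  MvPolynomial.aeval_X _ _

theorem exists_evalSeries_evalSum_eq_sum_prod (P : MvPolynomial 𝒮.D R) :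
    ∃ T : Multiset (Multiset (PowerSeries R)), (∀ t ∈ T, ∀ x ∈ t, x ∈ 𝒮.D) ∧
      𝒮.evalSeries P = (T.map Multiset.prod).sum ∧
      𝒮.evalSum P = (T.map fun t => (t.map 𝒮.S).prod).sum := by
  induction P using MvPolynomial.induction_on with
  | C r =>
    refine ⟨{{PowerSeries.C r}}, by simpa using 𝒮.C_mem r, ?_, ?_⟩
    · simp [evalSeries]
    · simp [evalSum, S_C]
  | add P Q hP hQ =>
    obtain ⟨T, hT, hTseries, hTsum⟩ := hP
    obtain ⟨U, hU, hUseries, hUsum⟩ := hQ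
    refine ⟨T + U, ?_, ?_, ?_⟩
    · simpa using fun t ht => (Multiset.mem_add.mp ht).elim (hT t) (hU t)
    · simp [hTseries, hUseries]
    · simp [hTsum, hUsum]
  | mul_X P d hP =>
    obtain ⟨T, hT, hTseries, hTsum⟩ := hP
    refine ⟨T.map (d.1 ::ₘ ·), ?_, ?_, ?_⟩
    · simp only [Multiset.forall_mem_map_iff, Multiset.mem_cons, forall_eq_or_imp]
      exact fun t ht => ⟨d.2, hT t ht⟩
    · rw [map_mul, hTseries, evalSeries_X, mul_comm, ← Multiset.sum_map_mul_left]
      simp [Multiset.map_map]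
    · rw [map_mul, hTsum, evalSum_X, mul_comm, ← Multiset.sum_map_mul_left]
      simp [Multiset.map_map]

variable {𝒮}

theorem mem_range_evalSeries {X : PowerSeries R} (hX : X ∈ 𝒮.D) : X ∈ 𝒮.evalSeries.range :=
  ⟨MvPolynomial.X ⟨X, hX⟩, 𝒮.evalSeries_X _⟩

theorem RespectsRelations.evalSum_eq_zero (h : 𝒮.RespectsRelations) {P : MvPolynomial 𝒮.D R}
    (hP : 𝒮.evalSeries P = 0) : 𝒮.evalSum P = 0 := by
  obtain ⟨T, hT, hseries, hsum⟩ := 𝒮.exists_evalSeries_evalSum_eq_sum_prod P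
  rw [hsum]
  exact h.multiset T hT (hseries ▸ hP)

theorem RespectsRelations.factorsThrough (h : 𝒮.RespectsRelations) :
    Function.FactorsThrough 𝒮.evalSum 𝒮.evalSeries := fun P Q hPQ =>
  sub_eq_zero.mp <| by
    rw [← map_sub]
    exact h.evalSum_eq_zero (by rw [map_sub, hPQ, sub_self])

variable (𝒮) in
/-- Meaningful only on the range of `evalSeries`, the subalgebra generated by `D`; elsewhere it
is `0`. -/
noncomputable def extendS : PowerSeries R → E :=
  Function.extend 𝒮.evalSeries 𝒮.evalSum 0

theorem RespectsRelations.extendS_evalSeries (h : 𝒮.RespectsRelations)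
    (P : MvPolynomial 𝒮.D R) : 𝒮.extendS (𝒮.evalSeries P) = 𝒮.evalSum P :=
  h.factorsThrough.extend_apply _ _

theorem RespectsRelations.extendS_eq_S (h : 𝒮.RespectsRelations) {X : PowerSeries R}
    (hX : X ∈ 𝒮.D) : 𝒮.extendS X = 𝒮.S X := by
  simpa using h.extendS_evalSeries (MvPolynomial.X ⟨X, hX⟩)

theorem RespectsRelations.extendS_add (h : 𝒮.RespectsRelations) {X Y : PowerSeries R}
    (hX : X ∈ 𝒮.evalSeries.range) (hY : Y ∈ 𝒮.evalSeries.range) :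
    𝒮.extendS (X + Y) = 𝒮.extendS X + 𝒮.extendS Y := by
  obtain ⟨P, rfl⟩ := (AlgHom.mem_range _).mp hX
  obtain ⟨Q, rfl⟩ := (AlgHom.mem_range _).mp hY
  rw [← map_add, h.extendS_evalSeries, h.extendS_evalSeries, h.extendS_evalSeries, map_add]

theorem RespectsRelations.extendS_mul (h : 𝒮.RespectsRelations) {X Y : PowerSeries R}
    (hX : X ∈ 𝒮.evalSeries.range) (hY : Y ∈ 𝒮.evalSeries.range) :
    𝒮.extendS (X * Y) = 𝒮.extendS X * 𝒮.extendS Y := by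
  obtain ⟨P, rfl⟩ := (AlgHom.mem_range _).mp hX
  obtain ⟨Q, rfl⟩ := (AlgHom.mem_range _).mp hY
  rw [← map_mul, h.extendS_evalSeries, h.extendS_evalSeries, h.extendS_evalSeries, map_mul]

theorem RespectsRelations.extendS_smul (h : 𝒮.RespectsRelations) (r : R) {X : PowerSeries R}
    (hX : X ∈ 𝒮.evalSeries.range) : 𝒮.extendS (r • X) = r • 𝒮.extendS X := by
  obtain ⟨P, rfl⟩ := (AlgHom.mem_range _).mp hX
  rw [← map_smul, h.extendS_evalSeries, h.extendS_evalSeries, map_smul]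

theorem RespectsRelations.extendS_one (h : 𝒮.RespectsRelations) : 𝒮.extendS 1 = 1 := by
  simpa using h.extendS_evalSeries 1

noncomputable def RespectsRelations.toMulSummation (h : 𝒮.RespectsRelations) :
    MulSummation R E where
  D := Subalgebra.toSubmodule 𝒮.evalSeries.range
  S := 𝒮.extendS
  S_add _ hX _ hY := h.extendS_add hX hY
  S_smul r _ hX := h.extendS_smul r hX
  poly_mem F := mem_range_evalSeries (𝒮.poly_mem F)
  S_one := h.extendS_one
  shift_mem _ hX := Subalgebra.mul_mem _ (mem_range_evalSeries 𝒮.one_sub_X_mem) hX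
  S_shift _ hX := by
    rw [h.extendS_mul (mem_range_evalSeries 𝒮.one_sub_X_mem) hX,
      h.extendS_eq_S 𝒮.one_sub_X_mem, 𝒮.S_one_sub_X, zero_mul]
  mul_mem _ hX _ hY := Subalgebra.mul_mem _ hX hY
  S_mul _ hX _ hY := h.extendS_mul hX hY

end Summation

namespace MulSummation

variable {R E : Type*} [CommRing R] [CommRing E] [Algebra R E] (𝒮 : MulSummation R E)

noncomputable def toSubalgebra : Subalgebra R (PowerSeries R) :=
  𝒮.D.toSubalgebra 𝒮.one_mem fun X Y hX hY => 𝒮.mul_mem X hX Y hY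

noncomputable def toAlgHom : 𝒮.toSubalgebra →ₐ[R] E :=
  AlgHom.mk'
    { toFun X := 𝒮.S X
      map_one' := 𝒮.S_one
      map_mul' X Y := 𝒮.S_mul X X.2 Y Y.2
      map_zero' := 𝒮.S_zero
      map_add' X Y := 𝒮.S_add X X.2 Y Y.2 }
    fun r X => 𝒮.S_smul r X X.2

theorem toAlgHom_apply (X : 𝒮.toSubalgebra) : 𝒮.toAlgHom X = 𝒮.S X := rfl

theorem respectsRelations_of_le {𝒮₀ : Summation R E} (hD : 𝒮₀.D ≤ 𝒮.D)
    (hS : ∀ X ∈ 𝒮₀.D, 𝒮.S X = 𝒮₀.S X) : 𝒮₀.RespectsRelations := by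
  intro ℓ k X hX hsum
  let Y i j : 𝒮.toSubalgebra := ⟨X i j, hD (hX i j)⟩
  have hY : ∑ i, ∏ j, Y i j = 0 := Subtype.ext (by simpa [Y] using hsum)
  calc ∑ i, ∏ j, 𝒮₀.S (X i j) = ∑ i, ∏ j, 𝒮.toAlgHom (Y i j) := by
        simp only [toAlgHom_apply, Y, hS _ (hX _ _)]
    _ = 𝒮.toAlgHom (∑ i, ∏ j, Y i j) := by simp only [map_sum, map_prod]
    _ = 0 := by rw [hY, map_zero]

end MulSummation

theorem weakly_multiplicative_iff_general {R E : Type*} [CommRing R] [CommRing E] [Algebra R E]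
    (𝒮 : Summation R E) :
    (∃ 𝒮' : MulSummation R E, 𝒮.D ≤ 𝒮'.D ∧ ∀ X ∈ 𝒮.D, 𝒮'.S X = 𝒮.S X) ↔
    (∀ (ℓ : ℕ) (k : Fin ℓ → ℕ) (X : (i : Fin ℓ) → Fin (k i) → PowerSeries R),
      (∀ i j, X i j ∈ 𝒮.D) →
      (∑ i : Fin ℓ, ∏ j : Fin (k i), X i j) = 0 →
      (∑ i : Fin ℓ, ∏ j : Fin (k i), 𝒮.S (X i j)) = 0) := by
  change _ ↔ 𝒮.RespectsRelations
  exact ⟨fun ⟨𝒮', hD, hS⟩ => 𝒮'.respectsRelations_of_le hD hS,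
    fun h => ⟨h.toMulSummation, fun _ => Summation.mem_range_evalSeries, fun _ => h.extendS_eq_S⟩⟩

theorem weakly_multiplicative_iff {R E : Type*} [CommRing R] [CommRing E] [Algebra R E]
    [Nontrivial R] [Nontrivial E]
    (𝒮 : Summation R E) :
    (∃ 𝒮' : MulSummation R E, 𝒮.D ≤ 𝒮'.D ∧ ∀ X ∈ 𝒮.D, 𝒮'.S X = 𝒮.S X) ↔
    (∀ (ℓ : ℕ) (k : Fin ℓ → ℕ) (X : (i : Fin ℓ) → Fin (k i) → PowerSeries R),
      (∀ i j, X i j ∈ 𝒮.D) →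
      (∑ i : Fin ℓ, ∏ j : Fin (k i), X i j) = 0 →
      (∑ i : Fin ℓ, ∏ j : Fin (k i), 𝒮.S (X i j)) = 0) :=
  weakly_multiplicative_iff_general 𝒮
end

section
/- Let k, ℓ ∈ ℕ and for 1 ≤ i ≤ ℓ and 1 ≤ j ≤ k+1 let X_{i,j} ∈ ℂ[[σ]] be convergent power series. If X = Σ_{i=1}^{ℓ} Π_{j=1}^{k+1} X_{i,j} has coefficient sequence (xₙ), then xₙ = O(nᵏ) as n → ∞. -/
/-- A formal power series over `ℂ` is convergent if its sequence of partial sums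
converges. -/
def Convergent (X : PowerSeries ℂ) : Prop :=
  ∃ l : ℂ, Filter.Tendsto (fun N : ℕ => ∑ n ∈ Finset.range N, PowerSeries.coeff n X)
    Filter.atTop (nhds l)

/-!
The coefficients of a convergent series tend to zero, so they are bounded. A Cauchy product of
`k + 1` series with coefficients bounded by `M₀, …, Mₖ` has its `n`-th coefficient bounded by
`M₀ ⋯ Mₖ (n + 1)ᵏ`, since the `n`-th coefficient of `f * g` is a sum of `n + 1` products.
-/

open Filter Asymptotics PowerSeries

namespace Convergent

theorem tendsto_coeff_atTop_zero {X : PowerSeries ℂ} (h : Convergent X) :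
    Tendsto (fun n => coeff n X) atTop (nhds 0) := by
  obtain ⟨l, hl⟩ := h
  have hdiff := (hl.comp (tendsto_add_atTop_nat 1)).sub hl
  rw [sub_self] at hdiff
  simpa [Finset.sum_range_succ] using hdiff

theorem exists_norm_coeff_le {X : PowerSeries ℂ} (h : Convergent X) :
    ∃ M : ℝ, ∀ n, ‖coeff n X‖ ≤ M := by
  obtain ⟨M, hM⟩ := h.tendsto_coeff_atTop_zero.norm.bddAbove_range
  exact ⟨M, fun n => hM ⟨n, rfl⟩⟩

end Convergent

section CoeffBounds

open Finset

variable {R : Type*}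

theorem PowerSeries.norm_coeff_mul_le [SeminormedRing R] {f g : PowerSeries R} {A B : ℝ}
    {a b : ℕ} (hf : ∀ n, ‖coeff n f‖ ≤ A * ((n : ℝ) + 1) ^ a)
    (hg : ∀ n, ‖coeff n g‖ ≤ B * ((n : ℝ) + 1) ^ b) (n : ℕ) :
    ‖coeff n (f * g)‖ ≤ A * B * ((n : ℝ) + 1) ^ (a + b + 1) := by
  have hA : 0 ≤ A := by simpa using (norm_nonneg _).trans (hf 0)
  have hB : 0 ≤ B := by simpa using (norm_nonneg _).trans (hg 0)
  have hterm : ∀ p ∈ antidiagonal n, ‖coeff p.1 f * coeff p.2 g‖ ≤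
      A * ((n : ℝ) + 1) ^ a * (B * ((n : ℝ) + 1) ^ b) := fun p hp =>
    (norm_mul_le _ _).trans <| mul_le_mul
      ((hf p.1).trans (by gcongr; exact HasAntidiagonal.antidiagonal.fst_le hp))
      ((hg p.2).trans (by gcongr; exact HasAntidiagonal.antidiagonal.snd_le hp))
      (norm_nonneg _) (by positivity)
  calc ‖coeff n (f * g)‖
      ≤ ∑ p ∈ antidiagonal n, ‖coeff p.1 f * coeff p.2 g‖ := by
        rw [coeff_mul]; exact norm_sum_le _ _
    _ ≤ ∑ _p ∈ antidiagonal n, A * ((n : ℝ) + 1) ^ a * (B * ((n : ℝ) + 1) ^ b) :=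
        sum_le_sum hterm
    _ = A * B * ((n : ℝ) + 1) ^ (a + b + 1) := by
        rw [sum_const, Nat.card_antidiagonal, nsmul_eq_mul]
        push_cast
        ring

theorem PowerSeries.norm_coeff_prod_le [SeminormedCommRing R] (m : ℕ)
    {Y : Fin (m + 1) → PowerSeries R} {M : Fin (m + 1) → ℝ}
    (hY : ∀ j n, ‖coeff n (Y j)‖ ≤ M j) (n : ℕ) :
    ‖coeff n (∏ j, Y j)‖ ≤ (∏ j, M j) * ((n : ℝ) + 1) ^ m := by
  induction m generalizing n with
  | zero => simpa using hY 0 n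
  | succ m ih =>
    rw [Fin.prod_univ_succ Y, Fin.prod_univ_succ M]
    simpa using norm_coeff_mul_le (a := 0) (by simpa using hY 0) (ih fun j => hY j.succ) n

end CoeffBounds

theorem isBigO_natCast_add_one_pow_atTop (k : ℕ) :
    (fun n : ℕ => ((n : ℝ) + 1) ^ k) =O[atTop] (fun n : ℕ => (n : ℝ) ^ k) := by
  refine IsBigO.pow (IsBigO.of_bound 2 ?_) k
  filter_upwards [eventually_ge_atTop 1] with n hn
  have : (1 : ℝ) ≤ n := by exact_mod_cast hn
  rw [Real.norm_of_nonneg (by positivity), Real.norm_of_nonneg (by positivity)]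
  linarith

theorem coeff_sum_prod_convergent_isBigO (k ℓ : ℕ)
    (X : Fin ℓ → Fin (k + 1) → PowerSeries ℂ)
    (hX : ∀ i j, Convergent (X i j)) :
    (fun n : ℕ => PowerSeries.coeff n (∑ i : Fin ℓ, ∏ j : Fin (k + 1), X i j))
      =O[Filter.atTop] (fun n : ℕ => (n : ℝ) ^ k) := by
  choose M hM using fun i j => (hX i j).exists_norm_coeff_le
  have hprod : ∀ i, (fun n => coeff n (∏ j, X i j)) =O[atTop] fun n => ((n : ℝ) + 1) ^ k :=
    fun i => IsBigO.of_bound (∏ j, M i j) <| Eventually.of_forall fun n => by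
      rw [Real.norm_of_nonneg (by positivity)]
      exact norm_coeff_prod_le k (hM i) n
  simp_rw [map_sum]
  exact IsBigO.fun_sum fun i _ => (hprod i).trans (isBigO_natCast_add_one_pow_atTop k)
end

section
/- Let (D, S) be a multiplicative summation on R to E. If a series X ∈ R[[σ]] is rationally summable over S to x ∈ E and also rationally summable over S to x′ ∈ E, then x = x′. (Well-definedness of the rational extension.) -/
/-- `X` is rationally summable over the multiplicative summation `𝒮` to `x`. -/
def RatSummable {R E : Type*} [CommRing R] [CommRing E] [Algebra R E]
    (𝒮 : MulSummation R E) (X : PowerSeries R) (x : E) : Prop :=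
  ∃ A B : PowerSeries R, A ∈ 𝒮.D ∧ B ∈ 𝒮.D ∧ A = B * X ∧
    𝒮.S B ∈ nonZeroDivisors E ∧ 𝒮.S A = 𝒮.S B * x

theorem ratSummable_unique {R E : Type*} [CommRing R] [CommRing E] [Algebra R E]
    [Nontrivial R] [Nontrivial E]
    (𝒮 : MulSummation R E) (X : PowerSeries R) (x x' : E)
    (h : RatSummable 𝒮 X x) (h' : RatSummable 𝒮 X x') : x = x' := by
  obtain ⟨A, B, hA, hB, hAB, hBreg, hS⟩ := h
  obtain ⟨A', B', hA', hB', hAB', hBreg', hS'⟩ := h'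
  have key : A * B' = A' * B := by rw [hAB, hAB']; ring
  have hSkey : 𝒮.S A * 𝒮.S B' = 𝒮.S A' * 𝒮.S B := by
    rw [← 𝒮.S_mul A hA B' hB', ← 𝒮.S_mul A' hA' B hB, key]
  rw [hS, hS'] at hSkey
  have hreg : 𝒮.S B * 𝒮.S B' ∈ nonZeroDivisors E := mul_mem hBreg hBreg'
  refine (mul_cancel_right_mem_nonZeroDivisors hreg).mp ?_
  calc x * (𝒮.S B * 𝒮.S B') = 𝒮.S B * x * 𝒮.S B' := by ring
    _ = 𝒮.S B' * x' * 𝒮.S B := hSkey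
    _ = x' * (𝒮.S B * 𝒮.S B') := by ring
end

section
/- Let (D, S) be a multiplicative summation on R to E, let X ∈ R[[σ]], x ∈ E, and let b ∈ E be regular. Suppose there exist series A, B ∈ R[[σ]] such that A = B·X, B is rationally summable over S to b, and A is rationally summable over S to b·x. Then X is rationally summable over S to x. (Idempotence of the rational extension: Q∘Q = Q.) -/
theorem ratSummable_idempotent {R E : Type*} [CommRing R] [CommRing E] [Algebra R E]
    [Nontrivial R] [Nontrivial E]
    (𝒮 : MulSummation R E) (X : PowerSeries R) (x : E)
    (b : E) (hb : b ∈ nonZeroDivisors E)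
    (A B : PowerSeries R) (hAB : A = B * X)
    (hB : RatSummable 𝒮 B b) (hA : RatSummable 𝒮 A (b * x)) :
    RatSummable 𝒮 X x := by
  obtain ⟨A₁, B₁, hA₁D, hB₁D, hEq₁, hreg₁, hS₁⟩ := hB
  obtain ⟨A₂, B₂, hA₂D, hB₂D, hEq₂, hreg₂, hS₂⟩ := hA
  refine ⟨B₁ * A₂, A₁ * B₂, 𝒮.mul_mem _ hB₁D _ hA₂D, 𝒮.mul_mem _ hA₁D _ hB₂D, ?_, ?_, ?_⟩
  · rw [hEq₂, hAB, hEq₁]; ring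
  · rw [𝒮.S_mul _ hA₁D _ hB₂D, hS₁]
    exact mul_mem (mul_mem hreg₁ hb) hreg₂
  · rw [𝒮.S_mul _ hB₁D _ hA₂D, 𝒮.S_mul _ hA₁D _ hB₂D, hS₁, hS₂]; ring
end

section
/- Let B, C ∈ ℂ[[σ]] with B convergent, and suppose there exists a polynomial F ∈ ℂ[σ] with F(1) ≠ 0 such that the product F·C is absolutely convergent. Then F·(B·C) is convergent. (Hence the product of a convergent series with a series telescopable over the absolutely convergent summation is telescopable over the classical summation.) -/
/-- A formal power series over `ℂ` is absolutely convergent if the series of the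
norms of its coefficients is summable. -/
def AbsConvergent (X : PowerSeries ℂ) : Prop :=
  Summable fun n : ℕ => ‖PowerSeries.coeff n X‖

open Filter Finset Topology

/-- Mertens' theorem. -/
theorem tendsto_sum_range_cauchy_product {𝕜 : Type*} [NormedField 𝕜] {f g : ℕ → 𝕜} {s t : 𝕜}
    (hf : Summable (‖f ·‖)) (hfs : HasSum f s)
    (hg : Tendsto (fun N ↦ ∑ n ∈ range N, g n) atTop (𝓝 t)) :
    Tendsto (fun N ↦ ∑ n ∈ range N, ∑ k ∈ range (n + 1), f k * g (n - k)) atTop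
      (𝓝 (s * t)) := by
  have hdefect : Tendsto (fun N ↦ (∑ k ∈ range N, f k) * (∑ k ∈ range N, g k) -
      ∑ n ∈ range N, ∑ k ∈ range (n + 1), f k * g (n - k)) atTop (𝓝 0) := by
    rw [Metric.tendsto_atTop]
    intro ε hε
    simpa [dist_eq_norm] using
      cauchy_product hf.hasSum.tendsto_sum_nat.cauchySeq.isCauSeq hg.cauchySeq.isCauSeq ε hε
  simpa using (hfs.tendsto_sum_nat.mul hg).sub hdefect

theorem convergent_mul_of_absConvergent {X Y : PowerSeries ℂ} (hX : AbsConvergent X)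
    (hY : Convergent Y) : Convergent (X * Y) := by
  obtain ⟨t, ht⟩ := hY
  refine ⟨(∑' n, PowerSeries.coeff n X) * t, ?_⟩
  simpa only [PowerSeries.coeff_mul, Nat.sum_antidiagonal_eq_sum_range_succ
    (fun i j ↦ PowerSeries.coeff i X * PowerSeries.coeff j Y)] using
    tendsto_sum_range_cauchy_product hX hX.of_norm.hasSum ht

theorem convergent_mul_of_telescopable_abs_general (B C : PowerSeries ℂ) (hB : Convergent B)
    (F : Polynomial ℂ)
    (hFC : AbsConvergent ((F : PowerSeries ℂ) * C)) :
    Convergent ((F : PowerSeries ℂ) * (B * C)) := by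
  rw [mul_left_comm, mul_comm]
  exact convergent_mul_of_absConvergent hFC hB

theorem convergent_mul_of_telescopable_abs (B C : PowerSeries ℂ) (hB : Convergent B)
    (F : Polynomial ℂ) (hF1 : F.eval 1 ≠ 0)
    (hFC : AbsConvergent ((F : PowerSeries ℂ) * C)) :
    Convergent ((F : PowerSeries ℂ) * (B * C)) :=
  convergent_mul_of_telescopable_abs_general B C hB F hFC
end

section
/- Let p be an odd prime and let r be an integer with p dividing r + 1. Define the rational numbers cₙ = binom(1/2, n)·(r² − 1)ⁿ, where binom(1/2, n) = (Π_{i=0}^{n−1} (1/2 − i))/n!. Then the series Σₙ cₙ converges in the p-adic numbers ℚ_p (its partial sums converge p-adically), and its p-adic sum equals −r. -/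
noncomputable def halfChoose (n : ℕ) : ℚ :=
  (∏ i ∈ Finset.range n, ((1 : ℚ) / 2 - (i : ℚ))) / (n.factorial : ℚ)

/-! Since `p` is odd, `1/2` is a `p`-adic integer, and `ℤ_[p]` is a binomial ring, so the
coefficients `binom(1/2, n)` have norm at most `1`; as `‖r² - 1‖ < 1`, the series converges.
The Chu–Vandermonde identity `Σ binom(1/2, i) binom(1/2, j) = binom(1, n)` makes its sum `s`
a square root of `1 + (r² - 1) = r²`. Finally `s ≡ 1` and `r ≡ -1` modulo `p`, and `1 ≢ -1`
because `p ≠ 2`, so `s = -r`. -/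

open Filter Topology Finset

lemma cast_halfChoose {K : Type*} [Field K] [CharZero K] (n : ℕ) :
    (halfChoose n : K) = Ring.choose (2⁻¹ : K) n := by
  rw [Ring.choose_eq_smul, smul_eq_mul, ← Polynomial.aeval_eq_smeval, Polynomial.aeval_def,
    Polynomial.eval₂_eq_eval_map, descPochhammer_map, descPochhammer_eval_eq_prod_range,
    halfChoose]
  push_cast
  rw [div_eq_inv_mul, one_div]

lemma sum_antidiagonal_choose_inv_two_mul {K : Type*} [Field K] [CharZero K] (n : ℕ) :
    ∑ ij ∈ antidiagonal n, Ring.choose (2⁻¹ : K) ij.1 * Ring.choose (2⁻¹ : K) ij.2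
      = Nat.choose 1 n := by
  rw [← Ring.add_choose_eq n (Commute.refl _), ← one_div, add_halves, ← Nat.cast_one,
    Ring.choose_natCast]

section NormedField

variable {K : Type*} [NormedField K]

lemma summable_norm_mul_pow_of_norm_le_one {c : ℕ → K} (hc : ∀ n, ‖c n‖ ≤ 1) {x : K}
    (hx : ‖x‖ < 1) : Summable fun n ↦ ‖c n * x ^ n‖ :=
  .of_nonneg_of_le (fun _ ↦ norm_nonneg _)
    (fun n ↦ by
      simpa [norm_mul, norm_pow] using mul_le_mul_of_nonneg_right (hc n) (by positivity))
    (summable_geometric_of_lt_one (norm_nonneg x) hx)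

lemma tsum_choose_inv_two_mul_pow_sq [CharZero K] [CompleteSpace K] {x : K}
    (hs : Summable fun n ↦ ‖Ring.choose (2⁻¹ : K) n * x ^ n‖) :
    (∑' n, Ring.choose (2⁻¹ : K) n * x ^ n) ^ 2 = 1 + x := by
  have hterm (n : ℕ) : ∑ ij ∈ antidiagonal n,
      Ring.choose (2⁻¹ : K) ij.1 * x ^ ij.1 * (Ring.choose (2⁻¹ : K) ij.2 * x ^ ij.2)
        = Nat.choose 1 n * x ^ n := by
    rw [← sum_antidiagonal_choose_inv_two_mul, sum_mul]
    refine sum_congr rfl fun ij hij ↦ ?_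
    rw [← mem_antidiagonal.mp hij, pow_add]
    ring
  rw [sq, tsum_mul_tsum_eq_tsum_sum_antidiagonal_of_summable_norm hs hs, tsum_congr hterm,
    tsum_eq_sum (s := range 2) fun n hn ↦ by
      rw [Nat.choose_eq_zero_of_lt (by simpa using hn), Nat.cast_zero, zero_mul]]
  simp [sum_range_succ]

variable [IsUltrametricDist K]

lemma norm_tsum_mul_pow_sub_le [CompleteSpace K] {c : ℕ → K} (hc : ∀ n, ‖c n‖ ≤ 1) {x : K}
    (hx : ‖x‖ < 1) : ‖∑' n, c n * x ^ n - c 0‖ ≤ ‖x‖ := by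
  rw [(summable_norm_mul_pow_of_norm_le_one hc hx).of_norm.tsum_eq_zero_add, pow_zero, mul_one,
    add_sub_cancel_left]
  refine IsUltrametricDist.norm_tsum_le_of_forall_le_of_nonneg (norm_nonneg x) fun n ↦ ?_
  calc ‖c (n + 1) * x ^ (n + 1)‖ ≤ 1 * ‖x‖ ^ (n + 1) := by
        rw [norm_mul, norm_pow]; gcongr; exact hc _
    _ ≤ ‖x‖ := by rw [one_mul]; exact pow_le_of_le_one (norm_nonneg x) hx.le n.succ_ne_zero

lemma eq_neg_of_sq_eq_sq_of_norm_sub_one_lt_one (h2 : ‖(2 : K)‖ = 1) {a b : K}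
    (hab : a ^ 2 = b ^ 2) (ha : ‖a - 1‖ < 1) (hb : ‖b + 1‖ < 1) : a = -b := by
  refine (sq_eq_sq_iff_eq_or_eq_neg.mp hab).resolve_left fun hab ↦ h2.not_lt ?_
  calc ‖(2 : K)‖ = ‖(b + 1) + (1 - a)‖ := by rw [hab]; ring_nf
    _ < 1 :=
      (IsUltrametricDist.norm_add_le_max _ _).trans_lt (max_lt hb (norm_sub_rev a 1 ▸ ha))

end NormedField

lemma Padic.norm_choose_le_one {p : ℕ} [Fact p.Prime] {x : ℚ_[p]} (hx : ‖x‖ ≤ 1) (n : ℕ) :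
    ‖Ring.choose x n‖ ≤ 1 := by
  obtain ⟨y, rfl⟩ : ∃ y : ℤ_[p], PadicInt.Coe.ringHom y = x := ⟨⟨x, hx⟩, rfl⟩
  rw [← Ring.map_choose]
  exact PadicInt.norm_le_one _

theorem padic_sqrt_series (p : ℕ) [Fact p.Prime] (hodd : Odd p) (r : ℤ)
    (hdvd : (p : ℤ) ∣ r + 1) :
    Filter.Tendsto
      (fun N : ℕ => ∑ n ∈ Finset.range N,
        ((halfChoose n * ((r : ℚ) ^ 2 - 1) ^ n : ℚ) : ℚ_[p]))
      Filter.atTop (nhds (-(r : ℚ_[p]))) := by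
  have h2 : ‖(2 : ℚ_[p])‖ = 1 :=
    mod_cast Padic.norm_natCast_eq_one_iff.mpr (Nat.coprime_two_right.mpr hodd)
  have hr : ‖(r : ℚ_[p]) + 1‖ < 1 := mod_cast Padic.norm_intCast_lt_one_iff.mpr hdvd
  have hx : ‖(r : ℚ_[p]) ^ 2 - 1‖ < 1 :=
    mod_cast Padic.norm_intCast_lt_one_iff.mpr (hdvd.trans ⟨r - 1, by ring⟩)
  have hc (n : ℕ) : ‖Ring.choose (2⁻¹ : ℚ_[p]) n‖ ≤ 1 :=
    Padic.norm_choose_le_one (by rw [norm_inv, h2, inv_one]) n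
  have hs := summable_norm_mul_pow_of_norm_le_one hc hx
  have hsum :
      ∑' n, Ring.choose (2⁻¹ : ℚ_[p]) n * ((r : ℚ_[p]) ^ 2 - 1) ^ n = -(r : ℚ_[p]) := by
    refine eq_neg_of_sq_eq_sq_of_norm_sub_one_lt_one h2 ?_ ?_ hr
    · rw [tsum_choose_inv_two_mul_pow_sq hs]; ring
    · simpa [Ring.choose_zero_right] using (norm_tsum_mul_pow_sub_le hc hx).trans_lt hx
  rw [← hsum]
  convert hs.of_norm.hasSum.tendsto_sum_nat using 3 with N n
  simp [cast_halfChoose]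
end
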